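/- Let R be a commutative ring, S a multiplicative subset of R, M an R-module, and A_1, …, A_n finitely many R-modules. Then the direct sum ⊕_{i=1}^n A_i is u-S-injective relative to M if and only if each A_i is u-S-injective relative to M. -/

import Mathlib

universe u v w

variable (R : Type u) [CommRing R]

/-- An `R`-module `T` is uniformly `S`-torsion if there is `s ∈ S` with `s • T = 0`. -/
def IsUSTorsion (S : Submonoid R) (T : Type*) [AddCommGroup T] [Module R T] : Prop :=
  ∃ s ∈ S, ∀ t : T, s • t = 0

/-- `f` is a `u`-`S`-epimorphism if its cokernel is uniformly `S`-torsion. -/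
def IsUSEpi (S : Submonoid R) {M N : Type*} [AddCommGroup M] [Module R M]
    [AddCommGroup N] [Module R N] (f : M →ₗ[R] N) : Prop :=
  IsUSTorsion R S (N ⧸ LinearMap.range f)

/-- `f` is a `u`-`S`-monomorphism if its kernel is uniformly `S`-torsion. -/
def IsUSMono (S : Submonoid R) {M N : Type*} [AddCommGroup M] [Module R M]
    [AddCommGroup N] [Module R N] (f : M →ₗ[R] N) : Prop :=
  IsUSTorsion R S (LinearMap.ker f)

/-- `P` is `u`-`S`-projective relative to `M` if for every `u`-`S`-epimorphism
`f : M → N`, the induced map `Hom(P,M) → Hom(P,N)` is a `u`-`S`-epimorphism. -/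
def IsUSProjRel (S : Submonoid R) (P : Type w) [AddCommGroup P] [Module R P]
    (M : Type v) [AddCommGroup M] [Module R M] : Prop :=
  ∀ (N : Type v) [AddCommGroup N] [Module R N] (f : M →ₗ[R] N),
    IsUSEpi R S f → IsUSEpi R S (LinearMap.llcomp (σ₁₂ := RingHom.id R) (σ₁₃ := RingHom.id R) R P M N f)

/-- `E` is `u`-`S`-injective relative to `M` if for every `u`-`S`-monomorphism
`f : K → M`, the induced map `Hom(M,E) → Hom(K,E)` is a `u`-`S`-epimorphism. -/
def IsUSInjRel (S : Submonoid R) (E : Type w) [AddCommGroup E] [Module R E]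
    (M : Type v) [AddCommGroup M] [Module R M] : Prop :=
  ∀ (K : Type v) [AddCommGroup K] [Module R K] (f : K →ₗ[R] M),
    IsUSMono R S f → IsUSEpi R S (LinearMap.lcomp R E f)


/-- Elementwise characterization of `u`-`S`-epimorphisms. -/
lemma isUSEpi_iff (S : Submonoid R) {M N : Type*} [AddCommGroup M] [Module R M]
    [AddCommGroup N] [Module R N] (f : M →ₗ[R] N) :
    IsUSEpi R S f ↔ ∃ s ∈ S, ∀ y : N, s • y ∈ LinearMap.range f := by
  unfold IsUSEpi IsUSTorsion
  constructor
  · rintro ⟨s, hsS, hs⟩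
    refine ⟨s, hsS, fun y => ?_⟩
    have := hs (Submodule.Quotient.mk y)
    rwa [← Submodule.Quotient.mk_smul, Submodule.Quotient.mk_eq_zero] at this
  · rintro ⟨s, hsS, hs⟩
    refine ⟨s, hsS, fun t => ?_⟩
    obtain ⟨y, rfl⟩ := Submodule.Quotient.mk_surjective _ t
    rw [← Submodule.Quotient.mk_smul, Submodule.Quotient.mk_eq_zero]
    exact hs y

open DirectSum in
theorem stmt4 (S : Submonoid R) (hS : (0 : R) ∉ S)
    (M : Type v) [AddCommGroup M] [Module R M]
    (n : ℕ) (A : Fin n → Type w) [∀ i, AddCommGroup (A i)] [∀ i, Module R (A i)] :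
    IsUSInjRel R S (⨁ i, A i) M ↔ ∀ i, IsUSInjRel R S (A i) M := by
    classical
  constructor
  · intro H i K _ _ f hf
    rw [isUSEpi_iff]
    obtain ⟨s, hsS, hs⟩ := (isUSEpi_iff R S _).mp (H K f hf)
    refine ⟨s, hsS, fun g => ?_⟩
    obtain ⟨h, hh⟩ := hs ((lof R (Fin n) A i).comp g)
    refine ⟨(component R (Fin n) A i).comp h, ?_⟩
    ext k
    have := LinearMap.congr_fun hh k
    simp only [LinearMap.lcomp_apply, LinearMap.comp_apply, LinearMap.smul_apply] at this ⊢
    have := congrArg (component R (Fin n) A i) this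
    simpa using this
  · intro H K _ _ f hf
    rw [isUSEpi_iff]
    choose s hsS hs using fun i => (isUSEpi_iff R S _).mp (H i K f hf)
    refine ⟨∏ i, s i, Submonoid.prod_mem S (fun i _ => hsS i), fun g => ?_⟩
    choose h hh using fun i => hs i ((component R (Fin n) A i).comp g)
    refine ⟨∑ i, (lof R (Fin n) A i).comp
      ((∏ j ∈ Finset.univ.erase i, s j) • h i), ?_⟩
    ext k : 1
    simp only [LinearMap.lcomp_apply, LinearMap.sum_apply, LinearMap.comp_apply,
      LinearMap.smul_apply]
    have key : ∀ i, h i (f k) = s i • component R (Fin n) A i (g k) := by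
      intro i
      have := LinearMap.congr_fun (hh i) k
      simpa using this
    calc ∑ i, (lof R (Fin n) A i) ((∏ j ∈ Finset.univ.erase i, s j) • h i (f k))
        = ∑ i, (lof R (Fin n) A i) ((∏ j, s j) • component R (Fin n) A i (g k)) := by
          refine Finset.sum_congr rfl fun i _ => ?_
          rw [key, smul_smul, Finset.prod_erase_mul _ _ (Finset.mem_univ i)]
      _ = (∏ j, s j) • ∑ i, (lof R (Fin n) A i) (component R (Fin n) A i (g k)) := by
          rw [Finset.smul_sum]; simp
      _ = (∏ j, s j) • g k := by
          congr 1
          exact sum_univ_of (g k)
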